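/- Let g = [[a, b], [b, d]] be a symmetric 2 × 2 real matrix, and define the (k+1) × (k+1) real matrix M(g), indexed by 0 ≤ i, j ≤ k, by M(g)_{ij} = binom(k, j) · (the coefficient of X^i Y^{k−i} in the polynomial (aX + bY)^j (bX + dY)^{k−j}). Then M(g)_{ij} = Σ_{l=0}^{i} binom(k, j) binom(j, i−l) binom(k−j, l) a^{i−l} b^{j−i+2l} d^{k−j−l} (with the convention binom(p, q) = 0 if q < 0 or q > p), and M(g) is a symmetric matrix: M(g)_{ij} = M(g)_{ji} for all 0 ≤ i, j ≤ k. -/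
import Mathlib


set_option synthInstance.maxHeartbeats 400000
set_option maxHeartbeats 400000

noncomputable section

open MvPolynomial

/-- The `(k+1) × (k+1)` real matrix `M(g)` attached to the symmetric matrix
`g = [[a, b], [b, d]]`: its `(i, j)` entry is `binom(k, j)` times the coefficient of
`X^i Y^{k-i}` in `(aX + bY)^j (bX + dY)^{k-j}` (with `X = X 0`, `Y = X 1`). -/
def Mmat (k : ℕ) (a b d : ℝ) : Matrix (Fin (k + 1)) (Fin (k + 1)) ℝ :=
  fun i j => (k.choose (j : ℕ) : ℝ) *
    coeff (Finsupp.single (0 : Fin 2) (i : ℕ) + Finsupp.single (1 : Fin 2) (k - (i : ℕ)))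
      ((C a * X 0 + C b * X 1) ^ (j : ℕ) * (C b * X 0 + C d * X 1) ^ (k - (j : ℕ)))

open Finset in
lemma expand_aux (a b : ℝ) (n : ℕ) :
    (C a * X 0 + C b * X 1 : MvPolynomial (Fin 2) ℝ) ^ n =
    ∑ m ∈ range (n+1), monomial (Finsupp.single 0 m + Finsupp.single 1 (n-m))
      (a ^ m * b ^ (n-m) * n.choose m) := by
  rw [add_pow]
  refine Finset.sum_congr rfl fun m hm => ?_
  rw [mul_pow, mul_pow, X_pow_eq_monomial, X_pow_eq_monomial, ← C_pow, ← C_pow,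
    C_mul_monomial, C_mul_monomial, monomial_mul,
    show ((n.choose m : ℕ) : MvPolynomial (Fin 2) ℝ) = C ((n.choose m : ℝ)) by simp,
    mul_comm _ (C ((n.choose m : ℝ))), C_mul_monomial]
  congr 1
  ring

lemma keyEq_aux (m p n q i r : ℕ) :
    (Finsupp.single (0:Fin 2) m + Finsupp.single 1 p + (Finsupp.single 0 n + Finsupp.single 1 q)
      = Finsupp.single 0 i + Finsupp.single 1 r) ↔ (m + n = i ∧ p + q = r) := by
  constructor
  · intro h
    constructor
    · have := DFunLike.congr_fun h 0; simpa using this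
    · have := DFunLike.congr_fun h 1; simpa using this
  · rintro ⟨h1, h2⟩
    ext x
    fin_cases x <;> simp [Finsupp.single_apply, h1, h2]

open Finset in
lemma coeff_prod_aux (a b d : ℝ) (k i j : ℕ) (hi : i ≤ k) (hj : j ≤ k) :
    coeff (Finsupp.single (0 : Fin 2) i + Finsupp.single (1 : Fin 2) (k - i))
      ((C a * X 0 + C b * X 1) ^ j * (C b * X 0 + C d * X 1) ^ (k - j)) =
    ∑ l ∈ range (i+1), (j.choose (i-l) : ℝ) * ((k-j).choose l : ℝ) *
      a ^ (i-l) * b ^ (j-(i-l)+l) * d ^ (k-j-l) := by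
  rw [expand_aux, expand_aux, Finset.sum_mul_sum]
  simp only [monomial_mul, MvPolynomial.coeff_sum, coeff_monomial, keyEq_aux]
  rw [Finset.sum_comm]
  have step1 : ∀ n ∈ range (k-j+1),
      (∑ m ∈ range (j+1), if m + n = i ∧ (j-m) + (k-j-n) = k - i then
        (a ^ m * b ^ (j-m) * (j.choose m : ℝ)) * (b ^ n * d ^ (k-j-n) * ((k-j).choose n : ℝ)) else 0)
      = (if n ≤ i ∧ i - n ≤ j then
          (a ^ (i-n) * b ^ (j-(i-n)) * (j.choose (i-n) : ℝ)) * (b ^ n * d ^ (k-j-n) * ((k-j).choose n : ℝ)) else 0) := by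
    intro n hn
    simp only [mem_range] at hn
    have hcond : ∀ m ∈ range (j+1),
        ((m + n = i ∧ (j-m) + (k-j-n) = k - i) ↔ (m = i - n ∧ n ≤ i)) := by
      intro m hm; simp only [mem_range] at hm; omega
    rw [Finset.sum_congr rfl fun m hm => if_congr (hcond m hm) rfl rfl]
    by_cases hni : n ≤ i
    · simp only [hni, and_true]
      rw [Finset.sum_ite_eq' (range (j+1))]
      simp only [mem_range]
      refine if_congr ?_ rfl rfl
      simp [Nat.lt_succ_iff]
    · simp [hni]
  rw [Finset.sum_congr rfl step1]
  have step2 : ∀ n ∈ range (k-j+1),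
      (if n ≤ i ∧ i - n ≤ j then
          (a ^ (i-n) * b ^ (j-(i-n)) * (j.choose (i-n) : ℝ)) * (b ^ n * d ^ (k-j-n) * ((k-j).choose n : ℝ)) else 0)
      = (if n ∈ range (i+1) then
          (j.choose (i-n) : ℝ) * ((k-j).choose n : ℝ) * a ^ (i-n) * b ^ (j-(i-n)+n) * d ^ (k-j-n) else 0) := by
    intro n hn
    simp only [mem_range, Nat.lt_succ_iff]
    by_cases h1 : n ≤ i
    · by_cases h2 : i - n ≤ j
      · simp only [h1, h2, and_self, if_true, pow_add]
        ring
      · simp only [h1, h2, and_false, if_false, if_true]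
        rw [Nat.choose_eq_zero_of_lt (by omega)]
        simp
    · simp [h1]
  rw [Finset.sum_congr rfl step2, Finset.sum_ite_mem]
  refine Finset.sum_subset (Finset.inter_subset_right) ?_
  intro n hn hn2
  simp only [mem_inter, mem_range, not_and] at hn hn2
  rw [Nat.choose_eq_zero_of_lt (show k - j < n by omega)]
  simp

lemma trin_aux (k j m l : ℕ) (hm : m ≤ j) (hj : j ≤ k) (hl : l ≤ k - j) :
    (k.choose j * j.choose m * (k-j).choose l) *
      (m.factorial * (j-m).factorial * (l.factorial * (k-j-l).factorial)) = k.factorial := by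
  have h1 := Nat.choose_mul_factorial_mul_factorial hm
  have h2 := Nat.choose_mul_factorial_mul_factorial hl
  have h3 := Nat.choose_mul_factorial_mul_factorial hj
  calc (k.choose j * j.choose m * (k-j).choose l) *
      (m.factorial * (j-m).factorial * (l.factorial * (k-j-l).factorial))
      = (j.choose m * m.factorial * (j-m).factorial) *
        ((k-j).choose l * l.factorial * (k-j-l).factorial) * k.choose j := by ring
    _ = j.factorial * (k-j).factorial * k.choose j := by rw [h1, h2]
    _ = k.choose j * j.factorial * (k-j).factorial := by ring
    _ = k.factorial := h3

lemma chooseSym_aux (k i j l : ℕ) (hl : l ≤ i) (hij : i ≤ j) (hjk : j ≤ k) :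
    k.choose j * j.choose (i-l) * (k-j).choose l
      = k.choose i * i.choose (i-l) * (k-i).choose (j-i+l) := by
  by_cases hkj : l ≤ k - j
  · have h1 := trin_aux k j (i-l) l (by omega) hjk hkj
    have h2 := trin_aux k i (i-l) (j-i+l) (by omega) (by omega) (by omega)
    rw [show i-(i-l) = l by omega, show k-i-(j-i+l) = k-j-l by omega] at h2
    rw [show j-(i-l) = j-i+l by omega] at h1
    have hprod : (i-l).factorial * l.factorial * ((j-i+l).factorial * (k-j-l).factorial)
        = (i-l).factorial * (j-i+l).factorial * (l.factorial * (k-j-l).factorial) := by ring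
    rw [hprod] at h2
    have hpos : 0 < (i-l).factorial * (j-i+l).factorial * (l.factorial * (k-j-l).factorial) :=
      Nat.mul_pos (Nat.mul_pos (Nat.factorial_pos _) (Nat.factorial_pos _))
        (Nat.mul_pos (Nat.factorial_pos _) (Nat.factorial_pos _))
    exact Nat.eq_of_mul_eq_mul_right hpos (h1.trans h2.symm)
  · rw [Nat.choose_eq_zero_of_lt (show k-j < l by omega),
      Nat.choose_eq_zero_of_lt (show k-i < j-i+l by omega)]
    simp

open Finset in
lemma Fsym_aux (a b d : ℝ) (k i j : ℕ) (hij : i ≤ j) (hjk : j ≤ k) :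
    (∑ l ∈ range (i+1), (k.choose j : ℝ) * (j.choose (i-l) : ℝ) * ((k-j).choose l : ℝ) *
        a ^ (i-l) * b ^ (j-(i-l)+l) * d ^ (k-j-l))
      = ∑ l ∈ range (j+1), (k.choose i : ℝ) * (i.choose (j-l) : ℝ) * ((k-i).choose l : ℝ) *
        a ^ (j-l) * b ^ (i-(j-l)+l) * d ^ (k-i-l) := by
  have e1 : (∑ l ∈ range (j+1), (k.choose i : ℝ) * (i.choose (j-l) : ℝ) * ((k-i).choose l : ℝ) *
        a ^ (j-l) * b ^ (i-(j-l)+l) * d ^ (k-i-l))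
      = ∑ l ∈ Ico (j-i) (j+1), (k.choose i : ℝ) * (i.choose (j-l) : ℝ) * ((k-i).choose l : ℝ) *
        a ^ (j-l) * b ^ (i-(j-l)+l) * d ^ (k-i-l) := by
    refine (Finset.sum_subset (fun x hx => mem_range.mpr (mem_Ico.mp hx).2) ?_).symm
    intro x hx hx2
    simp only [mem_range, mem_Ico, not_and, not_lt] at hx hx2
    rw [Nat.choose_eq_zero_of_lt (show i < j - x by omega)]
    ring
  rw [e1, Finset.sum_Ico_eq_sum_range, show j+1-(j-i) = i+1 by omega]
  refine Finset.sum_congr rfl fun l hl => ?_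
  simp only [mem_range, Nat.lt_succ_iff] at hl
  rw [show j-(j-i+l) = i-l by omega, show i-(i-l)+(j-i+l) = j-(i-l)+l by omega,
    show k-i-(j-i+l) = k-j-l by omega]
  have hc : (k.choose j : ℝ) * (j.choose (i-l) : ℝ) * ((k-j).choose l : ℝ)
      = (k.choose i : ℝ) * (i.choose (i-l) : ℝ) * ((k-i).choose (j-i+l) : ℝ) := by
    exact_mod_cast congrArg (Nat.cast : ℕ → ℝ) (chooseSym_aux k i j l hl hij hjk)
  linear_combination (a ^ (i-l) * b ^ (j-(i-l)+l) * d ^ (k-j-l)) * hc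

/-- The entries of `M(g)` are given by
`M(g)_{ij} = Σ_{l=0}^{i} binom(k,j) binom(j, i−l) binom(k−j, l) a^{i−l} b^{j−i+2l} d^{k−j−l}`
(with the convention that out-of-range binomial coefficients vanish; for the terms with a
nonzero binomial coefficient the natural number `j - (i - l) + l` equals `j − i + 2l`), and
`M(g)` is symmetric. -/
theorem statement12 (k : ℕ) (a b d : ℝ) :
    (∀ i j : Fin (k + 1), Mmat k a b d i j =
      ∑ l ∈ Finset.range ((i : ℕ) + 1),
        (k.choose (j : ℕ) : ℝ) * ((j : ℕ).choose ((i : ℕ) - l) : ℝ) *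
          ((k - (j : ℕ)).choose l : ℝ) *
          a ^ ((i : ℕ) - l) * b ^ ((j : ℕ) - ((i : ℕ) - l) + l) * d ^ (k - (j : ℕ) - l)) ∧
    (∀ i j : Fin (k + 1), Mmat k a b d i j = Mmat k a b d j i) := by
  have key : ∀ i j : Fin (k + 1), Mmat k a b d i j =
      ∑ l ∈ Finset.range ((i : ℕ) + 1),
        (k.choose (j : ℕ) : ℝ) * ((j : ℕ).choose ((i : ℕ) - l) : ℝ) *
          ((k - (j : ℕ)).choose l : ℝ) *
          a ^ ((i : ℕ) - l) * b ^ ((j : ℕ) - ((i : ℕ) - l) + l) * d ^ (k - (j : ℕ) - l) := by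
    intro i j
    have hi : (i : ℕ) ≤ k := Nat.lt_succ_iff.mp i.isLt
    have hj : (j : ℕ) ≤ k := Nat.lt_succ_iff.mp j.isLt
    show (k.choose (j : ℕ) : ℝ) * _ = _
    rw [coeff_prod_aux a b d k i j hi hj, Finset.mul_sum]
    exact Finset.sum_congr rfl fun l hl => by ring
  refine ⟨key, fun i j => ?_⟩
  rw [key i j, key j i]
  rcases le_total (i : ℕ) (j : ℕ) with h | h
  · exact Fsym_aux a b d k i j h (Nat.lt_succ_iff.mp j.isLt)
  · exact (Fsym_aux a b d k j i h (Nat.lt_succ_iff.mp i.isLt)).symm
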